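/- Let μ < 0 and ω, φ₀ ∈ ℝ. For t > 0 and φ ∈ ℝ define ρ(φ, t) = (1/(2π)) Σ_{n ∈ ℤ} exp((μ n² − i ω n) t) · exp(i n (φ − φ₀)). Then: (i) for every t > 0 the series converges absolutely; (ii) ρ(φ, t) is real-valued for all φ ∈ ℝ and t > 0; and (iii) ρ satisfies the Fokker-Planck equation of the phase diffusion, ∂_t ρ(φ, t) = −ω ∂_φ ρ(φ, t) − μ ∂²_φ ρ(φ, t), for all φ ∈ ℝ and t > 0. -/

import Mathlib

/-!
Each summand `exp(λₙ t) exp(in(φ - φ₀))` with `λₙ = μn² - iωn` is an eigenmode of the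
Fokker-Planck operator: `∂_t` multiplies it by `λₙ`, `∂_φ` by `in`, and
`λₙ = -ω (in) - μ (in)²`. Its modulus is `exp(μ t n²)`, a Gaussian in `n` since `μ < 0`, so the
series and all its termwise derivatives converge locally uniformly in `t > 0` and may be
differentiated term by term. Conjugation sends the `n`-th summand to the `(-n)`-th, so the sum is
real.
-/

open Complex
open scoped Real ComplexConjugate

lemma summable_abs_pow_mul_exp_mul_sq {a : ℝ} (ha : a < 0) (k : ℕ) :
    Summable fun n : ℤ => |(n : ℝ)| ^ k * rexp (a * (n : ℝ) ^ 2) := by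
  have hT : 0 < -a / π := div_pos (neg_pos.2 ha) Real.pi_pos
  refine (summable_pow_mul_jacobiTheta₂_term_bound 0 hT k).congr fun n => ?_
  rw [Int.cast_abs]
  congr 2
  field_simp
  ring

lemma im_tsum_eq_zero_of_conj_neg {f : ℤ → ℂ} (hf : ∀ n, conj (f n) = f (-n)) :
    (∑' n, f n).im = 0 := by
  refine conj_eq_iff_im.mp ?_
  calc conj (∑' n, f n) = ∑' n, f (-n) := by rw [← tsum_congr hf]; exact tsum_star
    _ = ∑' n, f n := (Equiv.neg ℤ).tsum_eq f

namespace PhaseDiffusion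

variable (μ ω φ₀ : ℝ)

noncomputable def eigenvalue (n : ℤ) : ℂ := ((μ * (n : ℝ) ^ 2 : ℝ) : ℂ) - I * ((ω * (n : ℝ) : ℝ) : ℂ)

noncomputable def mode (n : ℤ) (φ t : ℝ) : ℂ :=
  cexp (eigenvalue μ ω n * t) * cexp (I * (n : ℂ) * ((φ - φ₀ : ℝ) : ℂ))

variable {μ ω φ₀}

lemma eigenvalue_eq (n : ℤ) :
    eigenvalue μ ω n = -(ω : ℂ) * (I * n) - (μ : ℂ) * (I * n) ^ 2 := by
  rw [eigenvalue]
  push_cast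
  linear_combination ((μ : ℂ) * (n : ℂ) ^ 2) * I_sq

lemma norm_eigenvalue_le (n : ℤ) :
    ‖eigenvalue μ ω n‖ ≤ |μ| * |(n : ℝ)| ^ 2 + |ω| * |(n : ℝ)| := by
  refine (norm_sub_le _ _).trans_eq ?_
  rw [norm_mul, norm_I, one_mul, norm_real, norm_real, Real.norm_eq_abs, Real.norm_eq_abs,
    abs_mul, abs_mul, abs_pow]

lemma norm_mode (n : ℤ) (φ t : ℝ) : ‖mode μ ω φ₀ n φ t‖ = rexp (μ * t * (n : ℝ) ^ 2) := by
  have h_re : (eigenvalue μ ω n * t).re = μ * t * (n : ℝ) ^ 2 := by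
    simp only [eigenvalue, mul_re, sub_re, sub_im, ofReal_re, ofReal_im, I_re, I_im]
    ring
  have h_im : (I * (n : ℂ) * ((φ - φ₀ : ℝ) : ℂ)).re = 0 := by simp
  rw [mode, norm_mul, norm_exp, norm_exp, h_re, h_im, Real.exp_zero, mul_one]

lemma norm_pow_mul_mode (k : ℕ) (n : ℤ) (φ t : ℝ) :
    ‖(I * n) ^ k * mode μ ω φ₀ n φ t‖ = |(n : ℝ)| ^ k * rexp (μ * t * (n : ℝ) ^ 2) := by
  rw [norm_mul, norm_pow, norm_mul, norm_I, one_mul, norm_mode, norm_intCast]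

lemma summable_norm_pow_mul_mode (hμ : μ < 0) {t : ℝ} (ht : 0 < t) (k : ℕ) (φ : ℝ) :
    Summable fun n : ℤ => ‖(I * n) ^ k * mode μ ω φ₀ n φ t‖ := by
  simpa only [norm_pow_mul_mode] using
    summable_abs_pow_mul_exp_mul_sq (mul_neg_of_neg_of_pos hμ ht) k

lemma summable_norm_mode (hμ : μ < 0) {t : ℝ} (ht : 0 < t) (φ : ℝ) :
    Summable fun n : ℤ => ‖mode μ ω φ₀ n φ t‖ := by
  simpa using summable_norm_pow_mul_mode (ω := ω) (φ₀ := φ₀) hμ ht 0 φ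

lemma conj_mode (n : ℤ) (φ t : ℝ) : conj (mode μ ω φ₀ n φ t) = mode μ ω φ₀ (-n) φ t := by
  simp only [mode, eigenvalue, ← exp_conj, map_mul, map_sub, conj_ofReal, conj_I, map_intCast]
  push_cast
  ring_nf

lemma hasDerivAt_mode_time (n : ℤ) (φ t : ℝ) :
    HasDerivAt (mode μ ω φ₀ n φ ·) (eigenvalue μ ω n * mode μ ω φ₀ n φ t) t := by
  have h := ((hasDerivAt_id (t : ℂ)).const_mul (eigenvalue μ ω n)).cexp.comp_ofReal
  simpa [mode, mul_assoc, mul_comm (eigenvalue μ ω n)] using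
    h.mul_const (cexp (I * (n : ℂ) * ((φ - φ₀ : ℝ) : ℂ)))

lemma hasDerivAt_mode_phase (n : ℤ) (φ t : ℝ) :
    HasDerivAt (mode μ ω φ₀ n · t) (I * n * mode μ ω φ₀ n φ t) φ := by
  have h := (((hasDerivAt_id (φ : ℂ)).sub_const (φ₀ : ℂ)).const_mul (I * n)).cexp.comp_ofReal
  simpa [mode, mul_comm, mul_left_comm, mul_assoc] using
    h.const_mul (cexp (eigenvalue μ ω n * t))

lemma hasDerivAt_tsum_mode_time (hμ : μ < 0) {t : ℝ} (ht : 0 < t) (φ : ℝ) :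
    HasDerivAt (fun s => ∑' n : ℤ, mode μ ω φ₀ n φ s)
      (∑' n : ℤ, eigenvalue μ ω n * mode μ ω φ₀ n φ t) t := by
  have ha : μ * (t / 2) < 0 := mul_neg_of_neg_of_pos hμ (half_pos ht)
  refine hasDerivAt_tsum_of_isPreconnected
    (u := fun n : ℤ =>
      (|μ| * |(n : ℝ)| ^ 2 + |ω| * |(n : ℝ)| ^ 1) * rexp (μ * (t / 2) * (n : ℝ) ^ 2))
    ?_ isOpen_Ioi isPreconnected_Ioi (fun n s _ => hasDerivAt_mode_time n φ s) (fun n s hs => ?_)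
    (half_lt_self ht) (summable_norm_mode hμ ht φ).of_norm (half_lt_self ht)
  · simpa only [add_mul, mul_assoc] using
      ((summable_abs_pow_mul_exp_mul_sq ha 2).mul_left |μ|).add
        ((summable_abs_pow_mul_exp_mul_sq ha 1).mul_left |ω|)
  · rw [norm_mul, norm_mode, pow_one]
    refine mul_le_mul (norm_eigenvalue_le n) (Real.exp_le_exp.2 ?_) (by positivity) (by positivity)
    exact mul_le_mul_of_nonneg_right (mul_le_mul_of_nonpos_left (le_of_lt hs) hμ.le) (sq_nonneg _)

lemma hasDerivAt_tsum_pow_mul_mode_phase (hμ : μ < 0) {t : ℝ} (ht : 0 < t) (k : ℕ) (φ : ℝ) :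
    HasDerivAt (fun ψ => ∑' n : ℤ, (I * n) ^ k * mode μ ω φ₀ n ψ t)
      (∑' n : ℤ, (I * n) ^ (k + 1) * mode μ ω φ₀ n φ t) φ := by
  refine hasDerivAt_tsum (summable_abs_pow_mul_exp_mul_sq (mul_neg_of_neg_of_pos hμ ht) (k + 1))
    (fun n ψ => ?_) (fun n ψ => (norm_pow_mul_mode (k + 1) n ψ t).le)
    (summable_norm_pow_mul_mode hμ ht k φ).of_norm φ
  simpa [pow_succ, mul_assoc] using (hasDerivAt_mode_phase n ψ t).const_mul ((I * n) ^ k)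

lemma tsum_eigenvalue_mul_mode (hμ : μ < 0) {t : ℝ} (ht : 0 < t) (φ : ℝ) :
    ∑' n : ℤ, eigenvalue μ ω n * mode μ ω φ₀ n φ t
      = -(ω : ℂ) * ∑' n : ℤ, (I * n) ^ 1 * mode μ ω φ₀ n φ t
        - (μ : ℂ) * ∑' n : ℤ, (I * n) ^ 2 * mode μ ω φ₀ n φ t := by
  have hs (k : ℕ) (c : ℂ) : Summable fun n : ℤ => c * ((I * n) ^ k * mode μ ω φ₀ n φ t) :=
    (summable_norm_pow_mul_mode hμ ht k φ).of_norm.mul_left c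
  rw [← tsum_mul_left, ← tsum_mul_left, ← (hs 1 _).tsum_sub (hs 2 _)]
  exact tsum_congr fun n => by rw [eigenvalue_eq]; ring

end PhaseDiffusion

/-- the eigenfunction expansion
`ρ(φ,t) = (1/2π) Σ_{n ∈ ℤ} exp((μn² − iωn)t)·exp(in(φ−φ₀))` converges absolutely for
`t > 0`, is real-valued, and solves the Fokker-Planck equation
`∂_t ρ = −ω ∂_φ ρ − μ ∂²_φ ρ` of the phase diffusion. -/
theorem stmt12 (μ ω φ₀ : ℝ) (hμ : μ < 0) (ρ : ℝ → ℝ → ℂ)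
    (hρ : ∀ φ t : ℝ, ρ φ t = (1 / (2 * Real.pi) : ℂ) * ∑' n : ℤ,
        Complex.exp ((((μ * (n : ℝ) ^ 2 : ℝ) : ℂ) - Complex.I * ((ω * (n : ℝ) : ℝ) : ℂ)) * (t : ℂ))
          * Complex.exp (Complex.I * (n : ℂ) * ((φ - φ₀ : ℝ) : ℂ))) :
    (∀ t : ℝ, 0 < t → ∀ φ : ℝ, Summable fun n : ℤ =>
        ‖Complex.exp ((((μ * (n : ℝ) ^ 2 : ℝ) : ℂ) - Complex.I * ((ω * (n : ℝ) : ℝ) : ℂ)) * (t : ℂ))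
          * Complex.exp (Complex.I * (n : ℂ) * ((φ - φ₀ : ℝ) : ℂ))‖) ∧
    (∀ t : ℝ, 0 < t → ∀ φ : ℝ, (ρ φ t).im = 0) ∧
    (∀ t : ℝ, 0 < t → ∀ φ : ℝ,
      deriv (fun s : ℝ => ρ φ s) t
        = -(ω : ℂ) * deriv (fun ψ : ℝ => ρ ψ t) φ
          - (μ : ℂ) * deriv (deriv (fun ψ : ℝ => ρ ψ t)) φ) := by
  open PhaseDiffusion in
  obtain rfl : ρ = fun φ t => (1 / (2 * π) : ℂ) * ∑' n : ℤ, mode μ ω φ₀ n φ t :=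
    funext fun φ => funext fun t => hρ φ t
  refine ⟨fun t ht φ => summable_norm_mode hμ ht φ, fun t ht φ => ?_, fun t ht φ => ?_⟩
  · rw [mul_im, im_tsum_eq_zero_of_conj_neg (conj_mode · φ t)]
    simp
  · have hphase (k : ℕ) :
        deriv (fun ψ => (1 / (2 * π) : ℂ) * ∑' n : ℤ, (I * n) ^ k * mode μ ω φ₀ n ψ t)
          = fun ψ => (1 / (2 * π) : ℂ) * ∑' n : ℤ, (I * n) ^ (k + 1) * mode μ ω φ₀ n ψ t :=
        funext fun ψ => ((hasDerivAt_tsum_pow_mul_mode_phase hμ ht k ψ).const_mul _).deriv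
    have hpow_zero : (fun ψ => (1 / (2 * π) : ℂ) * ∑' n : ℤ, mode μ ω φ₀ n ψ t)
        = fun ψ => (1 / (2 * π) : ℂ) * ∑' n : ℤ, (I * n) ^ 0 * mode μ ω φ₀ n ψ t := by
      simp only [pow_zero, one_mul]
    rw [((hasDerivAt_tsum_mode_time hμ ht φ).const_mul _).deriv, tsum_eigenvalue_mul_mode hμ ht,
      hpow_zero, hphase, hphase]
    ring
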